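/- Let s : [0,∞) → ℝ be the step function with s(x) = k(k+1)/2 where k = ⌊x⌋ (the partial-sum function of 1 + 2 + 3 + ⋯). Then with q(P) = (3/2)(P − 1/3)P², we have q(P)[s](x) → −1/12 as x → ∞; i.e., the generalized Cesàro sum of ∑ n is −1/12. -/

import Mathlib

/-!
Write `s(x) = x²/2 + R(x)`. Since `P[xⁿ] = xⁿ/(n+1)`, the operator `P` acts on `x²` as
multiplication by `1/3`, a root of `q(P) = (3/2)(P - 1/3)P²`, so only `R` contributes.
Integrating `s` exactly gives `P[R](x) = β({x}) + γ({x})/x`, where the polynomials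
`β = oscillatingPart` and `γ = transientPart` take equal values at `0` and `1`: `P[R]` is
a continuous `1`-periodic function plus an `O(1/x)` error. The Cesàro mean of a continuous
periodic function tends to its average `∫₀¹ β = -1/12`, and `P` preserves limits, so `P²[R]` and
`P³[R]` both tend to `-1/12`, and `q(P)[s] → (3/2)(1 - 1/3)(-1/12) = -1/12`.
-/

open Filter intervalIntegral

/-- The continuous Cesàro operator (real-valued version). -/
noncomputable def cesaroPR (f : ℝ → ℝ) : ℝ → ℝ :=
  fun x => (1 / x) * ∫ t in (0 : ℝ)..x, f t

/-- The partial-sum function of `1 + 2 + 3 + ⋯`, i.e. `s(x) = k(k+1)/2` with `k = ⌊x⌋`. -/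
noncomputable def natPartialSum : ℝ → ℝ :=
  fun x => (⌊x⌋ : ℝ) * ((⌊x⌋ : ℝ) + 1) / 2

open MeasureTheory Set Function Topology

section Cesaro

variable {f g : ℝ → ℝ} {x : ℝ}

theorem cesaroPR_add (hf : IntervalIntegrable f volume 0 x)
    (hg : IntervalIntegrable g volume 0 x) : cesaroPR (f + g) x = cesaroPR f x + cesaroPR g x := by
  simp only [cesaroPR, Pi.add_apply, integral_add hf hg, mul_add]

theorem cesaroPR_eq_const_mul_pow_add {c : ℝ} {n : ℕ} (hx : 0 < x)
    (hg : IntervalIntegrable g volume 0 x) (hfg : EqOn f (fun t => c * t ^ n + g t) (Ioo 0 x)) :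
    cesaroPR f x = c / (n + 1) * x ^ n + cesaroPR g x := by
  have hpow : IntervalIntegrable (fun t => c * t ^ n) volume 0 x :=
    (continuous_const.mul (continuous_pow n)).intervalIntegrable 0 x
  simp only [cesaroPR, integral_congr_Ioo_of_le hx.le hfg, integral_add hpow hg,
    intervalIntegral.integral_const_mul, integral_pow]
  field_simp
  ring

theorem abs_cesaroPR_le {M t : ℝ} (hM : ∀ u ∈ Ioc 0 x, |f u| ≤ M) (ht : t ∈ Ioc 0 x) :
    |cesaroPR f t| ≤ M := by
  have hint : ‖∫ u in (0 : ℝ)..t, f u‖ ≤ M * |t - 0| :=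
    norm_integral_le_of_norm_le_const fun u hu =>
      hM u ⟨(uIoc_of_le ht.1.le ▸ hu).1, (uIoc_of_le ht.1.le ▸ hu).2.trans ht.2⟩
  rw [Real.norm_eq_abs, sub_zero, abs_of_pos ht.1] at hint
  rw [cesaroPR, abs_mul, one_div, abs_inv, abs_of_pos ht.1, inv_mul_le_iff₀ ht.1]
  linarith

theorem intervalIntegrable_cesaroPR {M : ℝ} (hx : 0 ≤ x) (hf : IntervalIntegrable f volume 0 x)
    (hM : ∀ t ∈ Ioc 0 x, |f t| ≤ M) : IntervalIntegrable (cesaroPR f) volume 0 x := by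
  have hcont : ContinuousOn (cesaroPR f) (Ioc 0 x) := by
    refine (continuousOn_const.div continuousOn_id fun t ht => ht.1.ne').mul ?_
    exact (continuousOn_primitive_interval' hf left_mem_uIcc).mono
      (uIcc_of_le hx ▸ Ioc_subset_Icc_self)
  rw [intervalIntegrable_iff_integrableOn_Ioc_of_le hx]
  exact ⟨hcont.aestronglyMeasurable measurableSet_Ioc,
    .restrict_of_bounded (C := M) measure_Ioc_lt_top
      ((ae_restrict_iff' measurableSet_Ioc).2 (ae_of_all _ fun t ht => abs_cesaroPR_le hM ht))⟩

theorem isLittleO_integral_of_tendsto_zero (hf : ∀ x ≥ 0, IntervalIntegrable f volume 0 x)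
    (hlim : Tendsto f atTop (𝓝 0)) : (fun x => ∫ t in (0 : ℝ)..x, f t) =o[atTop] id := by
  refine Asymptotics.IsLittleO.of_bound fun ε hε => ?_
  obtain ⟨N, hN⟩ := eventually_atTop.1
    ((tendsto_zero_iff_norm_tendsto_zero.1 hlim).eventually (gt_mem_nhds (half_pos hε)))
  set N₀ := max N 0
  have hN₀ : 0 ≤ N₀ := le_max_right N 0
  set C := |∫ t in (0 : ℝ)..N₀, f t|
  filter_upwards [eventually_ge_atTop (max N₀ (2 * C / ε))] with x hx
  have hN₀x : N₀ ≤ x := le_of_max_le_left hx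
  have hhead : C ≤ ε / 2 * x := by
    have hCx := le_of_max_le_right hx
    rw [div_le_iff₀ hε] at hCx
    linarith
  have htail : ‖∫ t in N₀..x, f t‖ ≤ ε / 2 * |x - N₀| :=
    norm_integral_le_of_norm_le_const fun t ht =>
      (hN t ((le_max_left N 0).trans (uIoc_of_le hN₀x ▸ ht).1.le)).le
  rw [Real.norm_eq_abs, abs_of_nonneg (sub_nonneg.2 hN₀x)] at htail
  rw [Real.norm_eq_abs, id, Real.norm_eq_abs, abs_of_nonneg (hN₀.trans hN₀x),
    ← sub_add_cancel (∫ t in (0 : ℝ)..x, f t) (∫ t in (0 : ℝ)..N₀, f t),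
    integral_interval_sub_left (hf x (hN₀.trans hN₀x)) (hf N₀ hN₀)]
  calc |(∫ t in N₀..x, f t) + ∫ t in (0 : ℝ)..N₀, f t|
      ≤ |∫ t in N₀..x, f t| + C := abs_add_le _ _
    _ ≤ ε / 2 * (x - N₀) + ε / 2 * x := add_le_add htail hhead
    _ ≤ ε * x := by nlinarith [mul_nonneg hε.le hN₀]

theorem tendsto_cesaroPR {l : ℝ} (hf : ∀ x ≥ 0, IntervalIntegrable f volume 0 x)
    (hlim : Tendsto f atTop (𝓝 l)) : Tendsto (cesaroPR f) atTop (𝓝 l) := by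
  have hsub : ∀ x ≥ 0, IntervalIntegrable (fun t => f t - l) volume 0 x :=
    fun x hx => (hf x hx).sub intervalIntegrable_const
  have hmean := (isLittleO_integral_of_tendsto_zero hsub
    (tendsto_sub_nhds_zero_iff.2 hlim)).tendsto_div_nhds_zero.const_add l
  rw [add_zero] at hmean
  refine hmean.congr' ?_
  filter_upwards [eventually_gt_atTop 0] with x hx
  rw [cesaroPR, integral_sub (hf x hx.le) intervalIntegrable_const,
    intervalIntegral.integral_const, id, sub_zero, smul_eq_mul]
  field_simp
  ring

theorem Function.Periodic.tendsto_div_atTop_zero {T : ℝ} (hf : Periodic f T) (hT : T ≠ 0)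
    (hcont : Continuous f) : Tendsto (fun x => f x / x) atTop (𝓝 0) := by
  obtain ⟨C, hC⟩ := (hf.isBounded_of_continuous hT hcont).exists_norm_le
  simp_rw [div_eq_inv_mul]
  exact tendsto_inv_atTop_zero.zero_mul_isBoundedUnder_le
    (isBoundedUnder_of ⟨C, fun x => hC _ (mem_range_self x)⟩)

theorem Function.Periodic.tendsto_cesaroPR {T : ℝ} (hf : Periodic f T) (hT : 0 < T)
    (hcont : Continuous f) :
    Tendsto (cesaroPR f) atTop (𝓝 ((∫ t in (0 : ℝ)..T, f t) / T)) := by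
  set m := (∫ t in (0 : ℝ)..T, f t) / T
  have hint : ∀ a b, IntervalIntegrable f volume a b := hcont.intervalIntegrable
  have hdev : Periodic (fun x => (∫ t in (0 : ℝ)..x, f t) - x * m) T := fun x => by
    dsimp only
    rw [← integral_add_adjacent_intervals (hint 0 x) (hint x (x + T)),
      hf.intervalIntegral_add_eq x 0, zero_add, add_mul, mul_div_cancel₀ _ hT.ne']
    ring
  have hlim := (hdev.tendsto_div_atTop_zero hT.ne'
    ((continuous_primitive hint 0).sub (continuous_id.mul continuous_const))).const_add m
  rw [add_zero] at hlim
  refine hlim.congr' ?_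
  filter_upwards [eventually_gt_atTop 0] with x hx
  rw [cesaroPR]
  field_simp
  ring

end Cesaro

theorem tendsto_cesaroPR_comp_fract {p : ℝ → ℝ} (hp : Continuous p) (hp01 : p 0 = p 1) :
    Tendsto (cesaroPR (p ∘ Int.fract)) atTop (𝓝 (∫ t in (0 : ℝ)..1, p t)) := by
  have hlim := ((Int.fract_periodic ℝ).comp p).tendsto_cesaroPR one_pos
    (hp.continuousOn.comp_fract'' hp01)
  rwa [div_one, integral_congr_Ioo_of_le (f := p ∘ Int.fract) (g := p) zero_le_one
    fun t ht => congrArg p (Int.fract_eq_self.2 ⟨ht.1.le, ht.2⟩)] at hlim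

section PartialSum

theorem natPartialSum_eq_of_mem_Ico {n : ℕ} {t : ℝ} (ht : t ∈ Ico (n : ℝ) (n + 1)) :
    natPartialSum t = n * (n + 1) / 2 := by
  have hfloor : ⌊t⌋ = n :=
    Int.floor_eq_iff.2 ⟨by exact_mod_cast ht.1, by exact_mod_cast ht.2⟩
  simp [natPartialSum, hfloor]

theorem natPartialSum_monotoneOn : MonotoneOn natPartialSum (Ici 0) := by
  intro a ha b _ hab
  have h0 : (0 : ℝ) ≤ ⌊a⌋ := by exact_mod_cast Int.floor_nonneg.2 ha
  have hle : (⌊a⌋ : ℝ) ≤ ⌊b⌋ := by exact_mod_cast Int.floor_mono hab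
  unfold natPartialSum
  gcongr
  linarith

theorem intervalIntegrable_natPartialSum {a b : ℝ} (ha : 0 ≤ a) (hb : 0 ≤ b) :
    IntervalIntegrable natPartialSum volume a b :=
  (natPartialSum_monotoneOn.mono fun _ ht => (le_min ha hb).trans ht.1).intervalIntegrable

theorem integral_natPartialSum_of_mem_Icc (n : ℕ) {y : ℝ} (hy : y ∈ Icc (n : ℝ) (n + 1)) :
    ∫ t in (n : ℝ)..y, natPartialSum t = (y - n) * (n * (n + 1) / 2) := by
  rw [integral_congr_Ioo_of_le (g := fun _ => (n : ℝ) * (n + 1) / 2) hy.1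
    fun t ht => natPartialSum_eq_of_mem_Ico ⟨ht.1.le, ht.2.trans_le hy.2⟩,
    intervalIntegral.integral_const, smul_eq_mul]

theorem integral_natPartialSum_natCast (n : ℕ) :
    ∫ t in (0 : ℝ)..n, natPartialSum t = ((n : ℝ) ^ 3 - n) / 6 := by
  induction n with
  | zero => simp
  | succ n ih =>
    have hn := n.cast_nonneg (α := ℝ)
    rw [← integral_add_adjacent_intervals (intervalIntegrable_natPartialSum le_rfl hn)
      (intervalIntegrable_natPartialSum hn (by positivity)), ih, Nat.cast_succ,
      integral_natPartialSum_of_mem_Icc n ⟨by linarith, le_rfl⟩]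
    ring

/-- In terms of Bernoulli polynomials, `oscillatingPart = -1/12 - B₂/2` and
`transientPart = B₃/3`. -/
noncomputable def oscillatingPart (a : ℝ) : ℝ := -1 / 6 + a / 2 - a ^ 2 / 2

noncomputable def transientPart (a : ℝ) : ℝ := a / 6 - a ^ 2 / 2 + a ^ 3 / 3

theorem integral_natPartialSum {x : ℝ} (hx : 0 ≤ x) :
    ∫ t in (0 : ℝ)..x, natPartialSum t =
      x ^ 3 / 6 + x * oscillatingPart (Int.fract x) + transientPart (Int.fract x) := by
  set n := ⌊x⌋₊
  have hfract : Int.fract x = x - n := by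
    rw [Int.fract, ← Int.natCast_floor_eq_floor hx, Int.cast_natCast]
  have hn := n.cast_nonneg (α := ℝ)
  rw [← integral_add_adjacent_intervals (intervalIntegrable_natPartialSum le_rfl hn)
    (intervalIntegrable_natPartialSum hn hx), integral_natPartialSum_natCast,
    integral_natPartialSum_of_mem_Icc n ⟨Nat.floor_le hx, (Nat.lt_floor_add_one x).le⟩, hfract,
    oscillatingPart, transientPart]
  ring

noncomputable def natPartialSumRemainder (x : ℝ) : ℝ := natPartialSum x - x ^ 2 / 2

theorem abs_natPartialSumRemainder_le {t : ℝ} (ht : 0 ≤ t) :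
    |natPartialSumRemainder t| ≤ t / 2 := by
  have h0 : (0 : ℝ) ≤ ⌊t⌋ := by exact_mod_cast Int.floor_nonneg.2 ht
  have hle : (⌊t⌋ : ℝ) ≤ t := Int.floor_le t
  have hlt : t < ⌊t⌋ + 1 := Int.lt_floor_add_one t
  rw [natPartialSumRemainder, natPartialSum, abs_le]
  constructor <;> nlinarith [mul_nonneg (add_nonneg h0 ht) (sub_nonneg.2 hlt.le)]

theorem intervalIntegrable_natPartialSumRemainder {x : ℝ} (hx : 0 ≤ x) :
    IntervalIntegrable natPartialSumRemainder volume 0 x :=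
  (intervalIntegrable_natPartialSum le_rfl hx).sub
    (((continuous_pow 2).div_const 2).intervalIntegrable 0 x)

theorem cesaroPR_natPartialSumRemainder {x : ℝ} (hx : 0 < x) :
    cesaroPR natPartialSumRemainder x =
      oscillatingPart (Int.fract x) + transientPart (Int.fract x) / x := by
  have hsq : IntervalIntegrable (fun t : ℝ => t ^ 2 / 2) volume 0 x :=
    ((continuous_pow 2).div_const 2).intervalIntegrable 0 x
  simp only [cesaroPR, natPartialSumRemainder]
  rw [integral_sub (intervalIntegrable_natPartialSum le_rfl hx.le) hsq,
    integral_natPartialSum hx.le, intervalIntegral.integral_div, integral_pow]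
  field_simp
  ring

end PartialSum

section Limits

theorem abs_natPartialSumRemainder_le_of_mem_Ioc {x t : ℝ} (ht : t ∈ Ioc 0 x) :
    |natPartialSumRemainder t| ≤ x / 2 :=
  (abs_natPartialSumRemainder_le ht.1.le).trans (by linarith [ht.2])

theorem intervalIntegrable_cesaroPR_natPartialSumRemainder {x : ℝ} (hx : 0 ≤ x) :
    IntervalIntegrable (cesaroPR natPartialSumRemainder) volume 0 x :=
  intervalIntegrable_cesaroPR hx (intervalIntegrable_natPartialSumRemainder hx)
    fun _ => abs_natPartialSumRemainder_le_of_mem_Ioc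

theorem intervalIntegrable_cesaroPR_cesaroPR_natPartialSumRemainder {x : ℝ} (hx : 0 ≤ x) :
    IntervalIntegrable (cesaroPR (cesaroPR natPartialSumRemainder)) volume 0 x :=
  intervalIntegrable_cesaroPR hx (intervalIntegrable_cesaroPR_natPartialSumRemainder hx)
    fun _ => abs_cesaroPR_le fun _ => abs_natPartialSumRemainder_le_of_mem_Ioc

theorem continuous_oscillatingPart : Continuous oscillatingPart := by
  unfold oscillatingPart
  fun_prop

theorem continuous_oscillatingPart_comp_fract : Continuous (oscillatingPart ∘ Int.fract) :=
  continuous_oscillatingPart.continuousOn.comp_fract'' (by norm_num [oscillatingPart])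

theorem integral_oscillatingPart : ∫ t in (0 : ℝ)..1, oscillatingPart t = -(1 / 12) := by
  unfold oscillatingPart
  rw [intervalIntegral.integral_sub, intervalIntegral.integral_add] <;> norm_num

theorem tendsto_cesaroPR_natPartialSumRemainder_sub_oscillatingPart :
    Tendsto (cesaroPR natPartialSumRemainder - oscillatingPart ∘ Int.fract) atTop (𝓝 0) := by
  have htrans : Continuous transientPart := by
    unfold transientPart
    fun_prop
  refine (((Int.fract_periodic ℝ).comp transientPart).tendsto_div_atTop_zero one_ne_zero
    (htrans.continuousOn.comp_fract'' (by norm_num [transientPart]))).congr' ?_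
  filter_upwards [eventually_gt_atTop 0] with x hx
  simp [cesaroPR_natPartialSumRemainder hx]

theorem tendsto_cesaroPR_cesaroPR_natPartialSumRemainder :
    Tendsto (cesaroPR (cesaroPR natPartialSumRemainder)) atTop (𝓝 (-(1 / 12))) := by
  have hosc := continuous_oscillatingPart_comp_fract.intervalIntegrable (μ := volume)
  have hsub (x : ℝ) (hx : 0 ≤ x) :
      IntervalIntegrable (cesaroPR natPartialSumRemainder - oscillatingPart ∘ Int.fract)
        volume 0 x :=
    (intervalIntegrable_cesaroPR_natPartialSumRemainder hx).sub (hosc 0 x)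
  have hmean := tendsto_cesaroPR_comp_fract continuous_oscillatingPart
    (by norm_num [oscillatingPart])
  rw [integral_oscillatingPart] at hmean
  rw [← add_zero (-(1 / 12) : ℝ)]
  refine (hmean.add (tendsto_cesaroPR hsub
    tendsto_cesaroPR_natPartialSumRemainder_sub_oscillatingPart)).congr' ?_
  filter_upwards [eventually_ge_atTop 0] with x hx
  rw [← cesaroPR_add (hosc 0 x) (hsub x hx), add_sub_cancel]

end Limits

theorem cesaroPR_natPartialSum {x : ℝ} (hx : 0 < x) :
    cesaroPR natPartialSum x = 1 / 6 * x ^ 2 + cesaroPR natPartialSumRemainder x :=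
  (cesaroPR_eq_const_mul_pow_add (c := 1 / 2) (n := 2) hx
    (intervalIntegrable_natPartialSumRemainder hx.le)
    fun t _ => by simp only [natPartialSumRemainder]; ring).trans (by norm_num)

theorem cesaroPR_cesaroPR_natPartialSum {x : ℝ} (hx : 0 < x) :
    cesaroPR (cesaroPR natPartialSum) x =
      1 / 18 * x ^ 2 + cesaroPR (cesaroPR natPartialSumRemainder) x :=
  (cesaroPR_eq_const_mul_pow_add hx (intervalIntegrable_cesaroPR_natPartialSumRemainder hx.le)
    fun _ ht => cesaroPR_natPartialSum ht.1).trans (by norm_num)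

theorem cesaroPR_cesaroPR_cesaroPR_natPartialSum {x : ℝ} (hx : 0 < x) :
    cesaroPR (cesaroPR (cesaroPR natPartialSum)) x =
      1 / 54 * x ^ 2 + cesaroPR (cesaroPR (cesaroPR natPartialSumRemainder)) x :=
  (cesaroPR_eq_const_mul_pow_add hx
    (intervalIntegrable_cesaroPR_cesaroPR_natPartialSumRemainder hx.le)
    fun _ ht => cesaroPR_cesaroPR_natPartialSum ht.1).trans (by norm_num)

/-- With `q(P) = (3/2)(P - 1/3)P²`, we have `q(P)[s](x) → -1/12`:
the generalized Cesàro sum of `∑ n` is `-1/12`. -/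
theorem generalized_cesaro_sum_naturals :
    Tendsto (fun x : ℝ =>
        (3 / 2) * (cesaroPR (cesaroPR (cesaroPR natPartialSum)) x
          - (1 / 3) * cesaroPR (cesaroPR natPartialSum) x))
      atTop (nhds (-(1 / 12))) := by
  have hP2 := tendsto_cesaroPR_cesaroPR_natPartialSumRemainder
  have hP3 := tendsto_cesaroPR
    (fun _ => intervalIntegrable_cesaroPR_cesaroPR_natPartialSumRemainder) hP2
  have hlim := (hP3.sub (hP2.const_mul (1 / 3))).const_mul (3 / 2)
  rw [show (3 / 2 : ℝ) * (-(1 / 12) - 1 / 3 * -(1 / 12)) = -(1 / 12) by norm_num] at hlim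
  refine hlim.congr' ?_
  filter_upwards [eventually_gt_atTop 0] with x hx
  rw [cesaroPR_cesaroPR_natPartialSum hx, cesaroPR_cesaroPR_cesaroPR_natPartialSum hx]
  ring
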